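/- Let n ≥ k+1. Then ℱ(d,k,n) = {F ∈ ℱ(d,k,n−1) : max F ≤ n−2} ∪ {ret_n(X+1) : X ∈ 𝒳_{n−1}(d,k) and max ret_{n−1}(X) ≥ n−2}, where X + 1 = {x + 1 : x ∈ X}. -/

import Mathlib

/-!
Retracting `X` to `[0, n]` and then applying `y ↦ max 0 (y - 1)` is the same as retracting
`X - 1` to `[0, n - 1]`. If `max ret_n(X) ≤ n - 2`, then `X` lies below `n - 1`, so
`ret_n(X) = ret_{n-1}(X)`. For any other facet `ret_n(X)`, we shift `X` down by one. The
retraction to `[0, n - 1]` loses a vertex only when `0` and `1` merge. When both are vertices,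
`1` lies in the first block of `X`, and then `X` has `d + 1` points in `[0, k + 1]`, so one vertex
is to spare.
-/

noncomputable section

open Finset

/-- `retr n X` : the retraction of `X`, clamping each element into `[0,n]`. -/
def retr (n : ℤ) (X : Finset ℤ) : Finset ℤ := X.image fun x => max 0 (min n x)

/-- A finite set is paired if it is a disjoint union of pairs `{y, y+1}`
of consecutive integers. -/
def IsPaired (Y : Finset ℤ) : Prop :=
  ∃ S : Finset ℤ, Y = S ∪ S.image (· + 1) ∧ ∀ a ∈ S, ∀ b ∈ S, a ≠ b → 2 ≤ |a - b|

/-- Membership in the collection `𝒳_n(d,k)` where `d = 2m+1`: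
`X = [i, i+2r-1] ∪ Y ∪ [i+k, i+k+2r-1]` with `1 ≤ r ≤ m`, `Y` a paired
`(d-2r-1)`-element subset of `[i+2r+1, i+k-2]`, and `|ret_n(X)| ≥ d`. -/
def MemX (m k n : ℕ) (X : Finset ℤ) : Prop :=
  ∃ (i : ℤ) (r : ℕ) (Y : Finset ℤ), 1 ≤ r ∧ r ≤ m ∧ IsPaired Y ∧
    Y.card = 2 * (m - r) ∧ Y ⊆ Finset.Icc (i + 2 * r + 1) (i + k - 2) ∧
    X = Finset.Icc i (i + 2 * r - 1) ∪ Y ∪ Finset.Icc (i + k) (i + k + 2 * r - 1) ∧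
    2 * m + 1 ≤ (retr n X).card

/-- `ℱ(d,k,n)` with `d = 2m+1` : the vertex sets of facets of the ordinary
polytope `P^{d,k,n}` (Dinh's theorem). -/
def Facets (m k n : ℕ) : Set (Finset ℤ) :=
  {F | ∃ X : Finset ℤ, MemX m k n X ∧ F = retr n X}

/-- Colexicographic order on finite sets of integers: `F ≺_c G` iff the maximal
element of the symmetric difference belongs to `G`. -/
def ColexLt (F G : Finset ℤ) : Prop :=
  ∃ z ∈ G, z ∉ F ∧ ∀ w, z < w → (w ∈ F ↔ w ∈ G)

/-- `S` is a Gale subset of `[a,b]`: `S ⊆ [a,b]` and between any two elements of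
`[a,b] \ S` there is an even number of elements of `S`. -/
def IsGale (a b : ℤ) (S : Finset ℤ) : Prop :=
  S ⊆ Finset.Icc a b ∧
    ∀ x ∈ Finset.Icc a b, ∀ y ∈ Finset.Icc a b,
      x ∉ S → y ∉ S → x < y → Even ((S ∩ Finset.Ioo x y).card)

/-- The maximal interval (run) of consecutive integers of `F` containing `x`
(empty if `x ∉ F`). -/
def runOf (F : Finset ℤ) (x : ℤ) : Finset ℤ :=
  F.filter fun y => Finset.Icc (min x y) (max x y) ⊆ F

/-- The maximum element of `F` (0 by convention if `F` is empty). -/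
def maxElt (F : Finset ℤ) : ℤ := WithBot.unbotD 0 F.max

/-- `E(S)` : the union over the maximal intervals `[a,b]` of `S` of
`{a+1, a+3, a+5, …} ∩ [a,b]` (the elements in even position of their run). -/
def Epos (S : Finset ℤ) : Finset ℤ :=
  @Finset.filter _
    (fun y => ∃ a : ℤ, Finset.Icc a y ⊆ S ∧ a - 1 ∉ S ∧ Odd (y - a))
    (Classical.decPred _) S

/-- `A^0(F)` for `F ∈ ℱ(d,k,n)`. -/
def A0 (k n : ℤ) (F : Finset ℤ) : Finset ℤ :=
  if maxElt F ≤ k - 1 then runOf F 0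
  else if maxElt F ≤ n - 1 then runOf F (maxElt F - k) ∪ runOf F (maxElt F - k + 2)
  else if n - k ∈ F then runOf F (n - k)
  else ∅

/-- `G_F = E(I^1) ∪ ⋯ ∪ E(I^p) ∪ I^n(F)` where `I^1, …, I^p` are the maximal
intervals of `F` disjoint from `A^0(F) ∪ I^n(F)`, and `I^n(F) = runOf F n`. -/
def GF (k n : ℤ) (F : Finset ℤ) : Finset ℤ :=
  Epos (F \ (A0 k n F ∪ runOf F n)) ∪ runOf F n

/-- The `t`-th smallest element of `F` (1-indexed). -/
def elt (F : Finset ℤ) (t : ℕ) : ℤ := (F.sort (· ≤ ·)).getD (t - 1) 0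

/-- The vertex set of the `t`-th ridge of `P^{d,k,n}` contained in the facet `F`
(with `F = {z_1 < ⋯ < z_p}`, `1 ≤ t ≤ p`):
`F(ẑ_1) = {z_1, …, z_{d-1}}`, `F(ẑ_p) = {z_{p-d+2}, …, z_p}`, and otherwise
`F(ẑ_t) = {z_ℓ : 0 < |ℓ - t| ≤ d-2}`. -/
def ridge (d : ℕ) (F : Finset ℤ) (t : ℕ) : Finset ℤ :=
  if t = 1 then (Finset.Icc 1 (d - 1)).image (elt F)
  else if t = F.card then (Finset.Icc (F.card - d + 2) F.card).image (elt F)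
  else ((Finset.Icc 1 F.card).filter fun l =>
      l ≠ t ∧ ((l : ℤ) - (t : ℤ)).natAbs ≤ d - 2).image (elt F)

/-- `T_{F,ℓ} = {z_ℓ, z_{ℓ+1}, …, z_{ℓ+d-1}}` : the `d` consecutive elements of
`F` starting at position `ℓ` (1-indexed). -/
def Tsimp (d : ℕ) (F : Finset ℤ) (l : ℕ) : Finset ℤ :=
  (Finset.Icc l (l + d - 1)).image (elt F)

/-- Helper for `U_{F,ℓ}`: `Uaux m k n F j = U_{F, (p-d+1)-j}` where `p = |F|`,
`d = 2m+1`. -/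
def Uaux (m k n : ℕ) (F : Finset ℤ) : ℕ → Finset ℤ
  | 0 => GF k n F
  | j + 1 =>
    (Uaux m k n F j \ {maxElt (Tsimp (2 * m + 1) F (F.card - (2 * m + 1) + 1 - j))}) ∪
      {maxElt (Tsimp (2 * m + 1) F (F.card - (2 * m + 1) + 1 - j)) - (k : ℤ),
       maxElt (Tsimp (2 * m + 1) F (F.card - (2 * m + 1) + 1 - j)) - 1}

/-- `U_{F,ℓ}` : `U_{F,p-d+1} = G_F` and, for `1 ≤ ℓ ≤ p-d`,
`U_{F,ℓ} = (U_{F,ℓ+1} \ {z}) ∪ {z-k, z-1}` where `z = max T_{F,ℓ+1}`. -/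
def Usimp (m k n : ℕ) (F : Finset ℤ) (l : ℕ) : Finset ℤ :=
  Uaux m k n F (F.card - (2 * m + 1) + 1 - l)

lemma mem_retr {n y : ℤ} {X : Finset ℤ} : y ∈ retr n X ↔ ∃ x ∈ X, max 0 (min n x) = y :=
  mem_image

lemma mem_retr_of_mem {n x : ℤ} {X : Finset ℤ} (hx : x ∈ X) (h0 : 0 ≤ x) (hn : x ≤ n) :
    x ∈ retr n X :=
  mem_retr.2 ⟨x, hx, by omega⟩

lemma nonneg_of_mem_retr {n y : ℤ} {X : Finset ℤ} (hy : y ∈ retr n X) : 0 ≤ y := by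
  obtain ⟨x, -, rfl⟩ := mem_retr.1 hy
  exact le_max_left _ _

lemma retr_eq_retr_sub_one {n : ℤ} {X : Finset ℤ} (h : ∀ x ∈ X, x ≤ n - 1) :
    retr n X = retr (n - 1) X :=
  image_congr fun x hx => by
    have := h x hx
    omega

lemma image_retr_image_add_one (n : ℤ) (X : Finset ℤ) :
    (retr n (X.image (· + 1))).image (fun y => max 0 (y - 1)) = retr (n - 1) X := by
  simp only [retr, image_image, Function.comp_def]
  exact image_congr fun x _ => by omega

lemma card_retr_sub_one_le (n : ℤ) (X : Finset ℤ) :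
    (retr (n - 1) X).card ≤ (retr n (X.image (· + 1))).card :=
  image_retr_image_add_one n X ▸ card_image_le

lemma image_add_neg_one_image_add_one (X : Finset ℤ) :
    (X.image (· + -1)).image (· + 1) = X := by
  rw [image_image, show ((· + 1) ∘ (· + -1) : ℤ → ℤ) = id from funext fun x => by simp, image_id]

lemma injOn_max_zero_sub_one {s : Set ℤ} (hs : ∀ y ∈ s, 0 ≤ y) (h : 0 ∉ s ∨ 1 ∉ s) :
    Set.InjOn (fun y => max 0 (y - 1)) s := by
  intro y hy z hz (hyz : max 0 (y - 1) = max 0 (z - 1))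
  have := hs y hy
  have := hs z hz
  rcases h with h | h
  · have : y ≠ 0 := fun e => h (e ▸ hy)
    have : z ≠ 0 := fun e => h (e ▸ hz)
    omega
  · have : y ≠ 1 := fun e => h (e ▸ hy)
    have : z ≠ 1 := fun e => h (e ▸ hz)
    omega

lemma card_le_card_image_max_zero_sub_one_add_one {F : Finset ℤ} (hF : ∀ y ∈ F, 0 ≤ y) :
    F.card ≤ (F.image fun y => max 0 (y - 1)).card + 1 := by
  have hinj : Set.InjOn (fun y : ℤ => max 0 (y - 1)) ↑(F.erase 0) :=
    injOn_max_zero_sub_one (fun y hy => hF y (mem_of_mem_erase hy)) (Or.inl (by simp))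
  have := card_image_of_injOn hinj
  have := card_le_card (image_subset_image (f := fun y => max 0 (y - 1)) (F.erase_subset 0))
  have := F.pred_card_le_card_erase (a := 0)
  omega

lemma maxElt_eq_max' {F : Finset ℤ} (h : F.Nonempty) : maxElt F = F.max' h := by
  rw [maxElt, ← coe_max' h]
  rfl

lemma le_maxElt {F : Finset ℤ} {y : ℤ} (hy : y ∈ F) : y ≤ maxElt F :=
  maxElt_eq_max' ⟨y, hy⟩ ▸ F.le_max' y hy

lemma maxElt_mem {F : Finset ℤ} (h : F.Nonempty) : maxElt F ∈ F :=
  maxElt_eq_max' h ▸ F.max'_mem h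

lemma exists_le_of_le_maxElt_retr {n c : ℤ} {X : Finset ℤ} (hc : 0 < c)
    (h : c ≤ maxElt (retr n X)) : ∃ x ∈ X, c ≤ x := by
  rcases (retr n X).eq_empty_or_nonempty with he | hne
  · rw [he, show maxElt ∅ = 0 from rfl] at h
    omega
  · obtain ⟨x, hx, hxe⟩ := mem_retr.1 (maxElt_mem hne)
    exact ⟨x, hx, by omega⟩

lemma le_of_maxElt_retr_le {n c x : ℤ} {X : Finset ℤ} (hcn : c < n)
    (h : maxElt (retr n X) ≤ c) (hx : x ∈ X) : x ≤ c := by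
  have := le_maxElt (F := retr n X) (mem_retr.2 ⟨x, hx, rfl⟩)
  omega

def IsFacetPattern (m k : ℕ) (X : Finset ℤ) : Prop :=
  ∃ (i : ℤ) (r : ℕ) (Y : Finset ℤ), 1 ≤ r ∧ r ≤ m ∧ IsPaired Y ∧
    Y.card = 2 * (m - r) ∧ Y ⊆ Finset.Icc (i + 2 * r + 1) (i + k - 2) ∧
    X = Finset.Icc i (i + 2 * r - 1) ∪ Y ∪ Finset.Icc (i + k) (i + k + 2 * r - 1)

lemma memX_iff {m k n : ℕ} {X : Finset ℤ} :
    MemX m k n X ↔ IsFacetPattern m k X ∧ 2 * m + 1 ≤ (retr n X).card := by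
  constructor
  · rintro ⟨i, r, Y, hr1, hrm, hYp, hYc, hYs, hX, hcard⟩
    exact ⟨⟨i, r, Y, hr1, hrm, hYp, hYc, hYs, hX⟩, hcard⟩
  · rintro ⟨⟨i, r, Y, hr1, hrm, hYp, hYc, hYs, hX⟩, hcard⟩
    exact ⟨i, r, Y, hr1, hrm, hYp, hYc, hYs, hX, hcard⟩

lemma IsPaired.image_add {Y : Finset ℤ} (h : IsPaired Y) (c : ℤ) : IsPaired (Y.image (· + c)) := by
  obtain ⟨S, rfl, hsep⟩ := h
  refine ⟨S.image (· + c), by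
    simp only [image_union, image_image, Function.comp_def, add_right_comm], ?_⟩
  simp only [mem_image]
  rintro _ ⟨a, ha, rfl⟩ _ ⟨b, hb, rfl⟩ hab
  rw [add_sub_add_right_eq_sub]
  exact hsep a ha b hb (by rintro rfl; exact hab rfl)

lemma IsFacetPattern.image_add {m k : ℕ} {X : Finset ℤ} (h : IsFacetPattern m k X) (c : ℤ) :
    IsFacetPattern m k (X.image (· + c)) := by
  obtain ⟨i, r, Y, hr1, hrm, hYp, hYc, hYs, rfl⟩ := h
  refine ⟨i + c, r, Y.image (· + c), hr1, hrm, hYp.image_add c, ?_, ?_, ?_⟩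
  · rw [card_image_of_injective _ (add_left_injective c), hYc]
  · refine (image_subset_image hYs).trans_eq ?_
    rw [image_add_right_Icc]
    congr 1 <;> ring
  · rw [image_union, image_union, image_add_right_Icc, image_add_right_Icc]
    ring_nf

lemma two_mul_add_two_le_card_retr {m k n : ℕ} {X : Finset ℤ} (hk : 2 * m + 1 ≤ k)
    (hn : k + 1 ≤ n) (hX : IsFacetPattern m k X) (htop : ∃ x ∈ X, (n : ℤ) - 1 ≤ x)
    (h0 : 0 ∈ retr n X) (h1 : 1 ∈ retr n X) : 2 * m + 2 ≤ (retr n X).card := by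
  obtain ⟨i, r, Y, -, hrm, -, hYc, hYs, hXeq⟩ := hX
  have hY : ∀ y ∈ Y, i + 2 * r + 1 ≤ y ∧ y ≤ i + k - 2 := fun y hy => mem_Icc.1 (hYs hy)
  obtain ⟨c, hc, hcn⟩ := htop
  obtain ⟨a, ha, ha0⟩ := mem_retr.1 h0
  obtain ⟨b, hb, hb1⟩ := mem_retr.1 h1
  simp only [hXeq, mem_union, mem_Icc] at hc ha hb
  have hlow : i ≤ 0 ∧ (n : ℤ) ≤ i + k + 2 * r := by
    constructor
    · rcases ha with (ha | ha) | ha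
      · omega
      · have := hY a ha; omega
      · omega
    · rcases hc with (hc | hc) | hc
      · omega
      · have := hY c hc; omega
      · omega
  -- `htop` keeps `Y` and the last block above `1`, so `1` lies in the first block.
  have hfirst : 2 ≤ i + 2 * r := by
    rcases hb with (hb | hb) | hb
    · omega
    · have := hY b hb; omega
    · omega
  set B := Icc 0 (i + 2 * r - 1) ∪ Y ∪ Icc (i + k) (k + 1)
  have hB : B ⊆ retr n X := by
    intro y hy
    simp only [B, mem_union, mem_Icc] at hy
    rcases hy with (hy | hy) | hy
    · exact mem_retr_of_mem (by simp only [hXeq, mem_union, mem_Icc]; omega) (by omega) (by omega)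
    · have := hY y hy
      exact mem_retr_of_mem (by simp only [hXeq, mem_union]; tauto) (by omega) (by omega)
    · exact mem_retr_of_mem (by simp only [hXeq, mem_union, mem_Icc]; omega) (by omega) (by omega)
  have hBcard : B.card = 2 * m + 2 := by
    have d1 : Disjoint (Icc 0 (i + 2 * r - 1)) Y :=
      disjoint_left.2 fun y hy hyY => by have := hY y hyY; simp only [mem_Icc] at hy; omega
    have d2 : Disjoint (Icc 0 (i + 2 * r - 1) ∪ Y) (Icc (i + k) (k + 1)) :=
      disjoint_left.2 fun y hy hy' => by
        simp only [mem_union, mem_Icc] at hy hy'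
        rcases hy with hy | hy
        · omega
        · have := hY y hy; omega
    rw [card_union_of_disjoint d2, card_union_of_disjoint d1, Int.card_Icc, Int.card_Icc, hYc]
    omega
  exact hBcard ▸ card_le_card hB

lemma two_mul_add_one_le_card_retr_image_add_neg_one {m k n : ℕ} {X : Finset ℤ}
    (hk : 2 * m + 1 ≤ k) (hn : k + 1 ≤ n) (hX : IsFacetPattern m k X)
    (htop : ∃ x ∈ X, (n : ℤ) - 1 ≤ x) (hcard : 2 * m + 1 ≤ (retr n X).card) :
    2 * m + 1 ≤ (retr (n - 1) (X.image (· + -1))).card := by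
  rw [← image_retr_image_add_one, image_add_neg_one_image_add_one]
  have hnonneg : ∀ y ∈ retr n X, 0 ≤ y := fun y hy => nonneg_of_mem_retr hy
  by_cases h01 : 0 ∈ retr n X ∧ 1 ∈ retr n X
  · have := two_mul_add_two_le_card_retr hk hn hX htop h01.1 h01.2
    have := card_le_card_image_max_zero_sub_one_add_one hnonneg
    omega
  · rwa [card_image_of_injOn (injOn_max_zero_sub_one hnonneg (not_and_or.1 h01))]

lemma mem_facets_sub_one_iff {m k n : ℕ} {F : Finset ℤ} (hn : 1 ≤ n)
    (hF : maxElt F ≤ (n : ℤ) - 2) : F ∈ Facets m k (n - 1) ↔ F ∈ Facets m k n := by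
  have hcast : ((n - 1 : ℕ) : ℤ) = n - 1 := by omega
  have hretr : ∀ (X : Finset ℤ) (n' : ℤ), (n : ℤ) - 2 < n' → maxElt (retr n' X) ≤ (n : ℤ) - 2 →
      retr n X = retr (n - 1) X := fun X n' hn' hmax =>
    retr_eq_retr_sub_one fun x hx => by
      have := le_of_maxElt_retr_le hn' hmax hx
      omega
  simp only [Facets, Set.mem_ofPred_eq, memX_iff, hcast]
  constructor
  · rintro ⟨X, ⟨hX, hcard⟩, rfl⟩
    have e := hretr X _ (by omega) hF
    exact ⟨X, ⟨hX, e ▸ hcard⟩, e.symm⟩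
  · rintro ⟨X, ⟨hX, hcard⟩, rfl⟩
    have e := hretr X _ (by omega) hF
    exact ⟨X, ⟨hX, e ▸ hcard⟩, e⟩

lemma exists_memX_sub_one_of_mem_facets {m k n : ℕ} {F : Finset ℤ} (hk : 2 * m + 1 ≤ k)
    (hn : k + 1 ≤ n) (hF : F ∈ Facets m k n) (hmax : (n : ℤ) - 2 < maxElt F) :
    ∃ X, MemX m k (n - 1) X ∧ (n : ℤ) - 2 ≤ maxElt (retr ((n - 1 : ℕ) : ℤ) X) ∧
      F = retr n (X.image (· + 1)) := by
  have hcast : ((n - 1 : ℕ) : ℤ) = n - 1 := by omega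
  obtain ⟨X, hX, rfl⟩ := hF
  rw [memX_iff] at hX
  obtain ⟨x, hx, hxn⟩ :=
    exists_le_of_le_maxElt_retr (n := n) (X := X) (c := (n : ℤ) - 1) (by omega) (by omega)
  refine ⟨X.image (· + -1), memX_iff.2 ⟨hX.1.image_add (-1), ?_⟩, ?_, by
    rw [image_add_neg_one_image_add_one]⟩
  · exact hcast ▸ two_mul_add_one_le_card_retr_image_add_neg_one hk hn hX.1 ⟨x, hx, hxn⟩ hX.2
  · have := le_maxElt (F := retr ((n - 1 : ℕ) : ℤ) (X.image (· + -1)))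
      (mem_retr.2 ⟨x + -1, mem_image_of_mem _ hx, rfl⟩)
    omega

lemma retr_image_add_one_mem_facets {m k n : ℕ} {X : Finset ℤ} (hn : 1 ≤ n)
    (hX : MemX m k (n - 1) X) : retr n (X.image (· + 1)) ∈ Facets m k n := by
  have hcast : ((n - 1 : ℕ) : ℤ) = n - 1 := by omega
  rw [memX_iff, hcast] at hX
  exact ⟨_, memX_iff.2 ⟨hX.1.image_add 1, hX.2.trans (card_retr_sub_one_le n X)⟩, rfl⟩

theorem statement3_general (m k n : ℕ) (hk : 2 * m + 1 ≤ k) (hn : k + 1 ≤ n) :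
    Facets m k n =
      {F : Finset ℤ | F ∈ Facets m k (n - 1) ∧ maxElt F ≤ (n : ℤ) - 2} ∪
      {G : Finset ℤ | ∃ X : Finset ℤ, MemX m k (n - 1) X ∧
        (n : ℤ) - 2 ≤ maxElt (retr ((n - 1 : ℕ) : ℤ) X) ∧
        G = retr n (X.image (· + 1))} := by
  ext F
  simp only [Set.mem_union, Set.mem_ofPred_eq]
  constructor
  · intro hF
    rcases le_or_gt (maxElt F) ((n : ℤ) - 2) with hmax | hmax
    · exact Or.inl ⟨(mem_facets_sub_one_iff (by omega) hmax).2 hF, hmax⟩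
    · exact Or.inr (exists_memX_sub_one_of_mem_facets hk hn hF hmax)
  · rintro (⟨hF, hmax⟩ | ⟨X, hX, -, rfl⟩)
    · exact (mem_facets_sub_one_iff (by omega) hmax).1 hF
    · exact retr_image_add_one_mem_facets (by omega) hX

/-- for n ≥ k+1,
ℱ(d,k,n) = {F ∈ ℱ(d,k,n-1) : max F ≤ n-2}
  ∪ {ret_n(X+1) : X ∈ 𝒳_{n-1}(d,k), max ret_{n-1}(X) ≥ n-2}. -/
theorem statement3 (m k n : ℕ) (hm : 2 ≤ m) (hk : 2 * m + 1 ≤ k) (hn : k + 1 ≤ n) :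
    Facets m k n =
      {F : Finset ℤ | F ∈ Facets m k (n - 1) ∧ maxElt F ≤ (n : ℤ) - 2} ∪
      {G : Finset ℤ | ∃ X : Finset ℤ, MemX m k (n - 1) X ∧
        (n : ℤ) - 2 ≤ maxElt (retr ((n - 1 : ℕ) : ℤ) X) ∧
        G = retr n (X.image (· + 1))} :=
  statement3_general m k n hk hn
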